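/- Let W and W̃ be symmetric binary-input discrete memoryless channels such that W̃ is stochastically degraded with respect to W. Then for every n and every i ∈ {1,...,2^n}, the i-th polarized bit-channel W̃^{(i)} is stochastically degraded with respect to W^{(i)}. -/

import Mathlib

open Finset

/-- A discrete channel: nonnegative transition "probabilities" summing to one. -/
def IsChannel {X Y : Type} [Fintype Y] (W : X → Y → ℝ) : Prop :=
  (∀ x y, 0 ≤ W x y) ∧ ∀ x, ∑ y, W x y = 1

/-- `Wd` is (stochastically) degraded with respect to `W`. -/
def Degraded {X Y Z : Type} [Fintype Y] [Fintype Z]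
    (Wd : X → Z → ℝ) (W : X → Y → ℝ) : Prop :=
  ∃ P : Y → Z → ℝ, IsChannel P ∧ ∀ x z, Wd x z = ∑ y, P y z * W x y
/-- Arıkan's minus transform. -/
noncomputable def Wminus {Y : Type} (W : Fin 2 → Y → ℝ) : Fin 2 → Y × Y → ℝ :=
  fun u1 p => ∑ u2 : Fin 2, (1 / 2 : ℝ) * W (u1 + u2) p.1 * W u2 p.2

/-- Arıkan's plus transform. -/
noncomputable def Wplus {Y : Type} (W : Fin 2 → Y → ℝ) : Fin 2 → Y × Y × Fin 2 → ℝ :=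
  fun u2 p => (1 / 2 : ℝ) * W (p.2.2 + u2) p.1 * W u2 p.2.1
/-- Output alphabet of a polarized bit-channel indexed by a list of bits
(`true` = plus transform, `false` = minus transform). -/
def bitOut (Y : Type) : List Bool → Type
  | [] => Y
  | false :: bs => bitOut Y bs × bitOut Y bs
  | true :: bs => bitOut Y bs × bitOut Y bs × Fin 2

instance bitOutFintype (Y : Type) [inst : Fintype Y] : ∀ bs : List Bool, Fintype (bitOut Y bs)
  | [] => inst
  | false :: bs => letI := bitOutFintype Y bs
      inferInstanceAs (Fintype (bitOut Y bs × bitOut Y bs))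
  | true :: bs => letI := bitOutFintype Y bs
      inferInstanceAs (Fintype (bitOut Y bs × bitOut Y bs × Fin 2))

/-- The polarized bit-channel `W^{(i)}` where the binary expansion of `i - 1`
is the list of bits (`true` selecting the plus transform). -/
noncomputable def bitChannel {Y : Type} (W : Fin 2 → Y → ℝ) : (bs : List Bool) → Fin 2 → bitOut Y bs → ℝ
  | [] => W
  | false :: bs => Wminus (bitChannel W bs)
  | true :: bs => Wplus (bitChannel W bs)

/-- A symmetric binary-input DMC: there is an involutive output permutation
exchanging the roles of the two inputs. -/
def SymmetricBDMC {Y : Type} [Fintype Y] (W : Fin 2 → Y → ℝ) : Prop :=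
  IsChannel W ∧ ∃ π : Equiv.Perm Y, ∀ y, W 0 y = W 1 (π y) ∧ W 1 y = W 0 (π y)

/-! If `W̃ = P ∘ W`, then `W̃⁻ = (P ⊗ P) ∘ W⁻` and `W̃⁺ = (P ⊗ P ⊗ id) ∘ W⁺`: the degrading channel
of a transformed pair is the transformed degrading channel. Induction along the bits finishes. -/

lemma IsChannel.prod {X₁ X₂ Y₁ Y₂ : Type} [Fintype Y₁] [Fintype Y₂]
    {P : X₁ → Y₁ → ℝ} {Q : X₂ → Y₂ → ℝ} (hP : IsChannel P) (hQ : IsChannel Q) :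
    IsChannel fun (x : X₁ × X₂) (y : Y₁ × Y₂) => P x.1 y.1 * Q x.2 y.2 :=
  ⟨fun _ _ => mul_nonneg (hP.1 _ _) (hQ.1 _ _), fun x => by
    simp only [Fintype.sum_prod_type, ← mul_sum, hQ.2, mul_one, hP.2]⟩

lemma isChannel_id (X : Type) [Fintype X] [DecidableEq X] :
    IsChannel fun x y : X => if x = y then (1 : ℝ) else 0 :=
  ⟨fun _ _ => by positivity, fun x => by simp⟩

namespace Degraded

variable {Y Z : Type} [Fintype Y] [Fintype Z] {W : Fin 2 → Y → ℝ} {Wd : Fin 2 → Z → ℝ}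

lemma wminus (h : Degraded Wd W) : Degraded (Wminus Wd) (Wminus W) := by
  obtain ⟨P, hP, hWd⟩ := h
  refine ⟨_, hP.prod hP, fun u z => ?_⟩
  simp only [Wminus, hWd, Fintype.sum_prod_type, mul_sum, sum_mul]
  rw [sum_comm_cycle]
  refine sum_congr rfl fun _ _ => ?_
  rw [sum_comm]
  exact sum_congr rfl fun _ _ => sum_congr rfl fun _ _ => by ring

lemma wplus (h : Degraded Wd W) : Degraded (Wplus Wd) (Wplus W) := by
  obtain ⟨P, hP, hWd⟩ := h
  refine ⟨_, hP.prod (hP.prod (isChannel_id (Fin 2))), fun u z => ?_⟩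
  simp only [Wplus, hWd, Fintype.sum_prod_type, mul_sum, sum_mul, mul_ite,
    mul_one, mul_zero, ite_mul, zero_mul, sum_ite_eq', mem_univ, if_true]
  rw [sum_comm]
  exact sum_congr rfl fun _ _ => sum_congr rfl fun _ _ => by ring

lemma bitChannel (h : Degraded Wd W) :
    ∀ bs : List Bool, Degraded (bitChannel Wd bs) (bitChannel W bs)
  | [] => h
  | false :: bs => (h.bitChannel bs).wminus
  | true :: bs => (h.bitChannel bs).wplus

end Degraded

theorem bitchannel_degradation {Y Z : Type} [Fintype Y] [Fintype Z]
    (W : Fin 2 → Y → ℝ) (Wd : Fin 2 → Z → ℝ)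
    (hdeg : Degraded Wd W)
    (bs : List Bool) :
    Degraded (bitChannel Wd bs) (bitChannel W bs) :=
  hdeg.bitChannel bs
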